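/- arXiv:1808.10312 — 6 statements merged into one kernel-verified Lean document; each statement's English description precedes it below -/
import Mathlib

section
/- Soundness and completeness of the Logic of Approximate Entailment: for any theory T and any formula Φ of LAE, T proves Φ in the proof system of LAE if and only if T semantically entails Φ (i.e. every evaluation in every finite similarity space that satisfies all members of T also satisfies Φ). -/
/-- A finite t-norm: a finite subset `V` of the real unit interval containing `0` and `1`,
equipped with an associative, commutative, monotone operation with neutral element `1`. -/
structure FiniteTNorm where
  V : Set ℝ
  finite : V.Finite
  subset : V ⊆ Set.Icc (0 : ℝ) 1
  zero_mem : (0 : ℝ) ∈ V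
  one_mem : (1 : ℝ) ∈ V
  op : V → V → V
  op_assoc : ∀ a b c, op (op a b) c = op a (op b c)
  op_comm : ∀ a b, op a b = op b a
  op_one : ∀ a, op a ⟨1, one_mem⟩ = a
  op_mono : ∀ a b c d : V, (a : ℝ) ≤ (b : ℝ) → (c : ℝ) ≤ (d : ℝ) → (op a c : ℝ) ≤ (op b d : ℝ)

def FiniteTNorm.one (T : FiniteTNorm) : T.V := ⟨1, T.one_mem⟩

def FiniteTNorm.zero (T : FiniteTNorm) : T.V := ⟨0, T.zero_mem⟩

/-- A finite similarity space based on the finite t-norm `T`. -/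
structure SimilaritySpace (T : FiniteTNorm) (W : Type) [Fintype W] [Nonempty W] where
  S : W → W → T.V
  eq_one_iff : ∀ u v, S u v = T.one ↔ u = v
  symm : ∀ u v, S u v = S v u
  triangle : ∀ u v w, (T.op (S u v) (S v w) : ℝ) ≤ (S u w : ℝ)

/-- The `c`-neighbourhood `U_c(A)` of a set `A` of worlds. -/
def SimilaritySpace.nbhd {T : FiniteTNorm} {W : Type} [Fintype W] [Nonempty W]
    (sp : SimilaritySpace T W) (c : T.V) (A : Set W) : Set W :=
  {w | ∃ a ∈ A, (c : ℝ) ≤ (sp.S w a : ℝ)}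

/-- A totally ordered similarity space: a finite similarity space together with a total
order compatible with the similarity. -/
structure TOSimilaritySpace (T : FiniteTNorm) (W : Type) [Fintype W] [Nonempty W]
    [LinearOrder W] extends SimilaritySpace T W where
  compat : ∀ u v w : W, u ≤ v → v ≤ w → (S u w : ℝ) ≤ min (S u v : ℝ) (S v w : ℝ)

/-- The downward closure `◇≤ A`. -/
def dcl {W : Type} [LinearOrder W] (A : Set W) : Set W := {v | ∃ w ∈ A, v ≤ w}

/-- The upward closure `◇≥ A`. -/
def ucl {W : Type} [LinearOrder W] (A : Set W) : Set W := {v | ∃ w ∈ A, w ≤ v}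

/-! ## Syntax of the Logic of Approximate Entailment `LAE` -/

/-- Basic expressions of `LAE` over `N` propositional variables. -/
inductive BExp (N : ℕ) : Type
  | var (i : Fin N)
  | bot
  | top
  | and (φ ψ : BExp N)
  | or (φ ψ : BExp N)
  | not (φ : BExp N)

/-- Classical Boolean evaluation of a basic expression. -/
def BExp.beval {N : ℕ} (v : Fin N → Bool) : BExp N → Bool
  | .var i => v i
  | .bot => false
  | .top => true
  | .and φ ψ => φ.beval v && ψ.beval v
  | .or φ ψ => φ.beval v || ψ.beval v
  | .not φ => !φ.beval v

/-- `φ → ψ` is a tautology of classical propositional logic. -/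
def Tautology {N : ℕ} (φ ψ : BExp N) : Prop :=
  ∀ v : Fin N → Bool, φ.beval v = true → ψ.beval v = true

/-- The literal on variable `i`, positive or negated according to `b`. -/
def BExp.literal {N : ℕ} (i : Fin N) (b : Bool) : BExp N :=
  if b then BExp.var i else BExp.not (BExp.var i)

/-- The conjunction of a list of basic expressions. -/
def conjList {N : ℕ} : List (BExp N) → BExp N
  | [] => BExp.top
  | [φ] => φ
  | φ :: χ :: rest => BExp.and φ (conjList (χ :: rest))

/-- A maximally elementary conjunction (m.e.c.): a conjunction of literals in which each
variable occurs exactly once. -/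
def IsMec {N : ℕ} (φ : BExp N) : Prop :=
  ∃ (l : List (Fin N)) (f : Fin N → Bool),
    l.Nodup ∧ (∀ i, i ∈ l) ∧ φ = conjList (l.map fun i => BExp.literal i (f i))

/-- Formulas: Boolean combinations of graded implications `φ ⤳_c ψ`. -/
inductive LFml (N : ℕ) (V : Type) : Type
  | gi (φ : BExp N) (c : V) (ψ : BExp N)
  | and (Φ Ψ : LFml N V)
  | or (Φ Ψ : LFml N V)
  | not (Φ : LFml N V)

/-- The (definable) outer-level implication `Φ → Ψ := ¬Φ ∨ Ψ`. -/
def LFml.imp {N : ℕ} {V : Type} (Φ Ψ : LFml N V) : LFml N V := LFml.or (LFml.not Φ) Ψ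

/-- Boolean evaluation of a formula given truth values for the graded implications
occurring in it; a formula is a substitution instance of a classical tautology by graded
implications iff it evaluates to `true` under every such assignment. -/
def LFml.peval {N : ℕ} {V : Type} (g : BExp N → V → BExp N → Bool) : LFml N V → Bool
  | .gi φ c ψ => g φ c ψ
  | .and Φ Ψ => Φ.peval g && Ψ.peval g
  | .or Φ Ψ => Φ.peval g || Ψ.peval g
  | .not Φ => !Φ.peval g

/-! ## The proof system of `LAE` -/

/-- Provability in `LAE` from a theory `Th`: axioms (A1)–(A11) and modus ponens. -/
inductive LAEProv {N : ℕ} (T : FiniteTNorm) (Th : Set (LFml N T.V)) : LFml N T.V → Prop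
  | hyp {Φ} (h : Φ ∈ Th) : LAEProv T Th Φ
  | mp {Φ Ψ} (h₁ : LAEProv T Th Φ) (h₂ : LAEProv T Th (Φ.imp Ψ)) : LAEProv T Th Ψ
  | a1 {φ ψ : BExp N} (h : Tautology φ ψ) : LAEProv T Th (.gi φ T.one ψ)
  | a2 (φ ψ : BExp N) :
      LAEProv T Th ((LFml.gi φ T.one ψ).imp (.gi (φ.and ψ.not) T.one .bot))
  | a3 (φ ψ : BExp N) {c d : T.V} (h : (d : ℝ) ≤ (c : ℝ)) :
      LAEProv T Th ((LFml.gi φ c ψ).imp (.gi φ d ψ))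
  | a4 (φ ψ : BExp N) :
      LAEProv T Th ((LFml.not (.gi ψ T.one .bot)).imp (.gi φ T.zero ψ))
  | a5 (φ : BExp N) (c : T.V) :
      LAEProv T Th ((LFml.gi φ c .bot).imp (.gi φ T.one .bot))
  | a6 {δ ε : BExp N} (c : T.V) (hδ : IsMec δ) (hε : IsMec ε) :
      LAEProv T Th
        ((LFml.and (.not (.gi δ T.one .bot)) (.gi δ c ε)).imp (.gi ε c δ))
  | a7 (φ ψ χ : BExp N) (c : T.V) :
      LAEProv T Th ((LFml.and (.gi φ c χ) (.gi ψ c χ)).imp (.gi (φ.or ψ) c χ))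
  | a8 {ε : BExp N} (φ ψ : BExp N) (c : T.V) (hε : IsMec ε) :
      LAEProv T Th ((LFml.gi ε c (φ.or ψ)).imp (.or (.gi ε c φ) (.gi ε c ψ)))
  | a9 (φ ψ χ : BExp N) (c d : T.V) :
      LAEProv T Th ((LFml.and (.gi φ c ψ) (.gi ψ d χ)).imp (.gi φ (T.op c d) χ))
  | a10 : LAEProv T Th (LFml.not (.gi .top T.one .bot))
  | a11 {Φ : LFml N T.V} (h : ∀ g : BExp N → T.V → BExp N → Bool, Φ.peval g = true) :
      LAEProv T Th Φ

/-! ## Semantics of `LAE` -/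

/-- An evaluation of the basic expressions in a finite similarity space: it commutes with
the Boolean operations and separates any two distinct worlds by some variable. -/
structure LAEEval (N : ℕ) (W : Type) [Fintype W] [Nonempty W] where
  e : BExp N → Set W
  map_bot : e .bot = ∅
  map_top : e .top = Set.univ
  map_and : ∀ φ ψ, e (φ.and ψ) = e φ ∩ e ψ
  map_or : ∀ φ ψ, e (φ.or ψ) = e φ ∪ e ψ
  map_not : ∀ φ, e φ.not = (e φ)ᶜ
  separating : ∀ v w : W, v ≠ w → ∃ i : Fin N, Xor' (v ∈ e (.var i)) (w ∈ e (.var i))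

/-- Satisfaction of a formula by an evaluation in a finite similarity space. -/
def LAESat {T : FiniteTNorm} {N : ℕ} {W : Type} [Fintype W] [Nonempty W]
    (sp : SimilaritySpace T W) (ev : LAEEval N W) : LFml N T.V → Prop
  | .gi φ c ψ => ev.e φ ⊆ sp.nbhd c (ev.e ψ)
  | .and Φ Ψ => LAESat sp ev Φ ∧ LAESat sp ev Ψ
  | .or Φ Ψ => LAESat sp ev Φ ∨ LAESat sp ev Ψ
  | .not Φ => ¬ LAESat sp ev Φ

/-- Semantic entailment in `LAE`: every evaluation in every finite similarity space that
satisfies all members of the theory also satisfies the formula. -/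
def LAEEntails {N : ℕ} (T : FiniteTNorm) (Th : Set (LFml N T.V)) (Φ : LFml N T.V) : Prop :=
  ∀ (W : Type) [Fintype W] [Nonempty W],
    ∀ (sp : SimilaritySpace T W) (ev : LAEEval N W),
      (∀ Ψ ∈ Th, LAESat sp ev Ψ) → LAESat sp ev Φ


/-!
Soundness: every axiom is valid in every finite similarity space. The only axioms that are not
immediate are (A6) and (A8), and both hold because a m.e.c. denotes at most one world, the
evaluation being separating.

Completeness: extend `Th ∪ {¬Φ}` to a maximal consistent theory `Δ` and build its canonical
model. Its worlds are the Boolean assignments `f` whose m.e.c. `δ_f` is not `1`-implied to be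
empty by `Δ`, and the similarity of `f` and `g` is the largest grade `c` with
`δ_f ⤳_c δ_g ∈ Δ`, which exists because `V` is finite and (A4) provides the grade `0`.
(A1)–(A2) make this similarity separate points, (A6) makes it symmetric and (A9) transitive.
Writing basic expressions in disjunctive normal form, (A7) on the left and (A8) on the right
reduce the truth lemma to graded implications between m.e.c.s, where it holds by construction.
-/

namespace FiniteTNorm

variable (T : FiniteTNorm)

lemma val_nonneg (c : T.V) : (0 : ℝ) ≤ c := (T.subset c.2).1

lemma val_le_one (c : T.V) : (c : ℝ) ≤ 1 := (T.subset c.2).2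

lemma op_one' (c : T.V) : T.op c T.one = c := T.op_one c

lemma one_op (c : T.V) : T.op T.one c = c := by rw [T.op_comm]; exact T.op_one c

end FiniteTNorm

namespace SimilaritySpace

variable {T : FiniteTNorm} {W : Type} [Fintype W] [Nonempty W] (sp : SimilaritySpace T W)

lemma S_self (w : W) : sp.S w w = T.one := (sp.eq_one_iff w w).2 rfl

lemma nbhd_one (A : Set W) : sp.nbhd T.one A = A := by
  ext w
  refine ⟨fun ⟨a, ha, hS⟩ => ?_, fun hw => ⟨w, hw, by rw [sp.S_self]⟩⟩
  have : sp.S w a = T.one := Subtype.ext (le_antisymm (T.val_le_one _) hS)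
  rwa [(sp.eq_one_iff w a).1 this]

lemma nbhd_anti {c d : T.V} (h : (d : ℝ) ≤ c) (A : Set W) : sp.nbhd c A ⊆ sp.nbhd d A :=
  fun _ ⟨a, ha, hS⟩ => ⟨a, ha, h.trans hS⟩

@[simp]
lemma nbhd_empty (c : T.V) : sp.nbhd c (∅ : Set W) = ∅ := by
  simp [nbhd]

lemma nbhd_zero {A : Set W} (hA : A.Nonempty) : sp.nbhd T.zero A = Set.univ := by
  obtain ⟨a, ha⟩ := hA
  exact Set.eq_univ_of_forall fun _ => ⟨a, ha, T.val_nonneg _⟩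

lemma nbhd_union (c : T.V) (A B : Set W) :
    sp.nbhd c (A ∪ B) = sp.nbhd c A ∪ sp.nbhd c B := by
  ext w
  simp only [nbhd, Set.mem_union]
  grind

lemma subset_nbhd_trans {A B C : Set W} {c d : T.V} (hAB : A ⊆ sp.nbhd c B)
    (hBC : B ⊆ sp.nbhd d C) : A ⊆ sp.nbhd (T.op c d) C := by
  intro w hw
  obtain ⟨a, ha, hwa⟩ := hAB hw
  obtain ⟨b, hb, hab⟩ := hBC ha
  exact ⟨b, hb, (T.op_mono _ _ _ _ hwa hab).trans (sp.triangle w a b)⟩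

lemma subset_nbhd_symm {A B : Set W} {c : T.V} (hA : A.Nonempty) (hB : B.Subsingleton)
    (h : A ⊆ sp.nbhd c B) : B ⊆ sp.nbhd c A := by
  obtain ⟨u, hu⟩ := hA
  obtain ⟨b, hb, hub⟩ := h hu
  intro w hw
  rw [hB hw hb]
  exact ⟨u, hu, by rwa [sp.symm]⟩

lemma subset_nbhd_union {A B C : Set W} {c : T.V} (hA : A.Subsingleton)
    (h : A ⊆ sp.nbhd c (B ∪ C)) : A ⊆ sp.nbhd c B ∨ A ⊆ sp.nbhd c C := by
  rcases A.eq_empty_or_nonempty with rfl | ⟨u, hu⟩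
  · exact Or.inl (Set.empty_subset _)
  rw [hA.eq_singleton_of_mem hu, Set.singleton_subset_iff, Set.singleton_subset_iff]
  simpa [nbhd_union] using h hu

end SimilaritySpace

namespace BExp

variable {N : ℕ}

lemma beval_conjList (v : Fin N → Bool) :
    ∀ l : List (BExp N), (conjList l).beval v = true ↔ ∀ φ ∈ l, φ.beval v = true
  | [] => by simp [conjList, beval]
  | [φ] => by simp [conjList]
  | φ :: χ :: rest => by
      simp only [conjList, beval, Bool.and_eq_true, beval_conjList v (χ :: rest),
        List.forall_mem_cons]

lemma beval_literal (v : Fin N → Bool) (i : Fin N) (b : Bool) :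
    (literal i b).beval v = true ↔ v i = b := by
  cases b <;> simp [literal, beval]

def mec (f : Fin N → Bool) : BExp N :=
  conjList ((List.finRange N).map fun i => literal i (f i))

lemma isMec_mec (f : Fin N → Bool) : IsMec (mec f) :=
  ⟨List.finRange N, f, List.nodup_finRange N, List.mem_finRange, rfl⟩

lemma beval_mec (f v : Fin N → Bool) : (mec f).beval v = true ↔ v = f := by
  simp only [mec, beval_conjList, List.forall_mem_map, List.mem_finRange, forall_const,
    beval_literal, funext_iff]

lemma tautology_mec {f : Fin N → Bool} {φ : BExp N} (h : φ.beval f = true) :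
    Tautology (mec f) φ := by
  intro v hv
  rwa [(beval_mec f v).1 hv]

lemma tautology_bot (ψ : BExp N) : Tautology .bot ψ := by
  simp [Tautology, beval]

def disj (l : List (BExp N)) : BExp N := l.foldr .or .bot

lemma beval_disj (v : Fin N → Bool) (l : List (BExp N)) :
    (disj l).beval v = true ↔ ∃ φ ∈ l, φ.beval v = true := by
  induction l with
  | nil => simp [disj, beval]
  | cons φ rest ih => simp_all [disj, beval]

noncomputable def dnf (φ : BExp N) : List (BExp N) :=
  (Finset.univ.filter fun f => φ.beval f = true).toList.map mec

lemma mem_dnf {φ χ : BExp N} : χ ∈ dnf φ ↔ ∃ f, φ.beval f = true ∧ mec f = χ := by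
  simp [dnf]

lemma tautology_dnf (φ : BExp N) : Tautology φ (disj (dnf φ)) := by
  intro v hv
  rw [beval_disj]
  exact ⟨mec v, mem_dnf.2 ⟨v, hv, rfl⟩, (beval_mec v v).2 rfl⟩

end BExp

lemma IsMec.exists_beval_iff {N : ℕ} {δ : BExp N} (hδ : IsMec δ) :
    ∃ f : Fin N → Bool, ∀ v, δ.beval v = true ↔ v = f := by
  obtain ⟨l, f, -, hl, rfl⟩ := hδ
  refine ⟨f, fun v => ?_⟩
  simp only [BExp.beval_conjList, List.forall_mem_map, BExp.beval_literal, funext_iff]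
  exact ⟨fun h i => h i (hl i), fun h i _ => h i⟩

namespace LAEEval

variable {N : ℕ} {W : Type} [Fintype W] [Nonempty W] (ev : LAEEval N W)

open Classical in
noncomputable def assignment (w : W) : Fin N → Bool := fun i => decide (w ∈ ev.e (.var i))

lemma mem_e_iff_beval (φ : BExp N) (w : W) :
    w ∈ ev.e φ ↔ φ.beval (ev.assignment w) = true := by
  induction φ with
  | var i => simp [assignment, BExp.beval]
  | bot => simp [BExp.beval, ev.map_bot]
  | top => simp [BExp.beval, ev.map_top]
  | and φ ψ ihφ ihψ => simp [BExp.beval, ev.map_and, ihφ, ihψ]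
  | or φ ψ ihφ ihψ => simp [BExp.beval, ev.map_or, ihφ, ihψ]
  | not φ ihφ => simp [BExp.beval, ev.map_not, ihφ]

lemma e_subset_of_tautology {φ ψ : BExp N} (h : Tautology φ ψ) : ev.e φ ⊆ ev.e ψ := by
  intro w hw
  rw [mem_e_iff_beval] at hw ⊢
  exact h _ hw

lemma assignment_injective : Function.Injective ev.assignment := by
  intro v w h
  by_contra hne
  obtain ⟨i, hi⟩ := ev.separating v w hne
  have : v ∈ ev.e (.var i) ↔ w ∈ ev.e (.var i) := by
    simpa [assignment] using congrFun h i
  rcases hi with ⟨hv, hw⟩ | ⟨hw, hv⟩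
  · exact hw (this.1 hv)
  · exact hv (this.2 hw)

lemma subsingleton_e_of_isMec {δ : BExp N} (hδ : IsMec δ) : (ev.e δ).Subsingleton := by
  obtain ⟨f, hf⟩ := hδ.exists_beval_iff
  intro v hv w hw
  rw [mem_e_iff_beval, hf] at hv hw
  exact ev.assignment_injective (hv.trans hw.symm)

end LAEEval

section Soundness

variable {T : FiniteTNorm} {N : ℕ} {W : Type} [Fintype W] [Nonempty W]
  (sp : SimilaritySpace T W) (ev : LAEEval N W)

lemma LAESat_imp {Φ Ψ : LFml N T.V} :
    LAESat sp ev (Φ.imp Ψ) ↔ (LAESat sp ev Φ → LAESat sp ev Ψ) := by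
  simp only [LFml.imp, LAESat]
  tauto

open Classical in
lemma LAESat_iff_peval (Φ : LFml N T.V) :
    LAESat sp ev Φ ↔
      Φ.peval (fun φ c ψ => decide (ev.e φ ⊆ sp.nbhd c (ev.e ψ))) = true := by
  induction Φ with
  | gi φ c ψ => simp [LAESat, LFml.peval]
  | and Φ Ψ ihΦ ihΨ => simp [LAESat, LFml.peval, ihΦ, ihΨ]
  | or Φ Ψ ihΦ ihΨ => simp [LAESat, LFml.peval, ihΦ, ihΨ]
  | not Φ ihΦ => simp [LAESat, LFml.peval, ihΦ]

lemma LAESat_gi_bot_iff {φ : BExp N} {c : T.V} :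
    LAESat sp ev (.gi φ c .bot) ↔ ev.e φ = ∅ := by
  simp [LAESat, ev.map_bot, sp.nbhd_empty, Set.subset_empty_iff]

theorem LAEProv.sound {Th : Set (LFml N T.V)} {Φ : LFml N T.V} (h : LAEProv T Th Φ) :
    LAEEntails T Th Φ := by
  intro W _ _ sp ev hTh
  induction h with
  | hyp h => exact hTh _ h
  | mp _ _ ih₁ ih₂ => exact (LAESat_imp sp ev).1 ih₂ ih₁
  | a1 h =>
    show ev.e _ ⊆ _
    rw [sp.nbhd_one]
    exact ev.e_subset_of_tautology h
  | a2 φ ψ =>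
    refine (LAESat_imp sp ev).2 fun h => ?_
    rw [LAESat, sp.nbhd_one] at h
    rwa [LAESat_gi_bot_iff, ev.map_and, ev.map_not, ← Set.sdiff_eq, Set.sdiff_eq_empty]
  | a3 φ ψ hdc => exact (LAESat_imp sp ev).2 fun h => h.trans (sp.nbhd_anti hdc _)
  | a4 φ ψ =>
    refine (LAESat_imp sp ev).2 fun h => ?_
    rw [LAESat, LAESat_gi_bot_iff] at h
    show ev.e _ ⊆ _
    rw [sp.nbhd_zero (Set.nonempty_iff_ne_empty.2 h)]
    exact Set.subset_univ _
  | a5 φ c =>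
    refine (LAESat_imp sp ev).2 fun h => ?_
    rwa [LAESat_gi_bot_iff] at h ⊢
  | a6 c hδ hε =>
    refine (LAESat_imp sp ev).2 fun ⟨hδne, h⟩ => ?_
    rw [LAESat, LAESat_gi_bot_iff] at hδne
    exact sp.subset_nbhd_symm (Set.nonempty_iff_ne_empty.2 hδne)
      (ev.subsingleton_e_of_isMec hε) h
  | a7 φ ψ χ c =>
    refine (LAESat_imp sp ev).2 fun ⟨hφ, hψ⟩ => ?_
    show ev.e _ ⊆ _
    rw [ev.map_or]
    exact Set.union_subset hφ hψ
  | a8 φ ψ c hε =>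
    refine (LAESat_imp sp ev).2 fun h => ?_
    rw [LAESat, ev.map_or] at h
    exact sp.subset_nbhd_union (ev.subsingleton_e_of_isMec hε) h
  | a9 φ ψ χ c d =>
    exact (LAESat_imp sp ev).2 fun ⟨hφψ, hψχ⟩ => sp.subset_nbhd_trans hφψ hψχ
  | a10 =>
    rw [LAESat, LAESat_gi_bot_iff, ev.map_top]
    exact Set.univ_nonempty.ne_empty
  | a11 h => exact (LAESat_iff_peval sp ev _).2 (h _)

end Soundness

namespace LAEProv

variable {N : ℕ} {T : FiniteTNorm} {Th Th' : Set (LFml N T.V)} {Φ Ψ : LFml N T.V}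
  {φ ψ χ : BExp N} {c : T.V}

/-- Induction on derivations in which `ax` covers the eleven axiom schemas at once. -/
@[elab_as_elim]
theorem closure_induction {P : LFml N T.V → Prop} (hyp : ∀ Φ ∈ Th, P Φ)
    (ax : ∀ Φ, (∀ Th' : Set (LFml N T.V), LAEProv T Th' Φ) → P Φ)
    (mp : ∀ Φ Ψ, P Φ → P (Φ.imp Ψ) → P Ψ) (h : LAEProv T Th Φ) : P Φ := by
  induction h with
  | hyp h => exact hyp _ h
  | mp _ _ ih₁ ih₂ => exact mp _ _ ih₁ ih₂
  | a1 h => exact ax _ fun _ => .a1 h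
  | a2 φ ψ => exact ax _ fun _ => .a2 φ ψ
  | a3 φ ψ h => exact ax _ fun _ => .a3 φ ψ h
  | a4 φ ψ => exact ax _ fun _ => .a4 φ ψ
  | a5 φ c => exact ax _ fun _ => .a5 φ c
  | a6 c hδ hε => exact ax _ fun _ => .a6 c hδ hε
  | a7 φ ψ χ c => exact ax _ fun _ => .a7 φ ψ χ c
  | a8 φ ψ c hε => exact ax _ fun _ => .a8 φ ψ c hε
  | a9 φ ψ χ c d => exact ax _ fun _ => .a9 φ ψ χ c d
  | a10 => exact ax _ fun _ => .a10
  | a11 h => exact ax _ fun _ => .a11 h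

theorem mono (hsub : Th ⊆ Th') (h : LAEProv T Th Φ) : LAEProv T Th' Φ :=
  h.closure_induction (fun _ hΦ => .hyp (hsub hΦ)) (fun _ hΦ => hΦ Th') fun _ _ => .mp

theorem exists_finite_subset (h : LAEProv T Th Φ) :
    ∃ s ⊆ Th, s.Finite ∧ LAEProv T s Φ := by
  refine h.closure_induction (fun Φ hΦ => ?_) (fun Φ hΦ => ?_) fun _ _ ih₁ ih₂ => ?_
  · exact ⟨{Φ}, Set.singleton_subset_iff.2 hΦ, Set.finite_singleton Φ, .hyp rfl⟩
  · exact ⟨∅, Set.empty_subset Th, Set.finite_empty, hΦ ∅⟩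
  · obtain ⟨s₁, hs₁, hf₁, hp₁⟩ := ih₁
    obtain ⟨s₂, hs₂, hf₂, hp₂⟩ := ih₂
    exact ⟨s₁ ∪ s₂, Set.union_subset hs₁ hs₂, hf₁.union hf₂,
      .mp (hp₁.mono Set.subset_union_left) (hp₂.mono Set.subset_union_right)⟩

theorem of_peval_imp (hΦ : LAEProv T Th Φ)
    (h : ∀ g : BExp N → T.V → BExp N → Bool, Φ.peval g = true → Ψ.peval g = true) :
    LAEProv T Th Ψ :=
  .mp hΦ (.a11 fun g => by grind [LFml.imp, LFml.peval])

theorem and (hΦ : LAEProv T Th Φ) (hΨ : LAEProv T Th Ψ) : LAEProv T Th (Φ.and Ψ) :=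
  .mp hΨ (.mp hΦ (.a11 fun g => by grind [LFml.imp, LFml.peval]))

theorem deduction (h : LAEProv T (insert Φ Th) Ψ) : LAEProv T Th (Φ.imp Ψ) := by
  refine h.closure_induction (fun Ψ hΨ => ?_) (fun Ψ hΨ => ?_) fun _ _ ih₁ ih₂ => ?_
  · rcases hΨ with rfl | hΨ
    · exact .a11 fun g => by grind [LFml.imp, LFml.peval]
    · exact of_peval_imp (.hyp hΨ) fun g => by grind [LFml.imp, LFml.peval]
  · exact of_peval_imp (hΨ Th) fun g => by grind [LFml.imp, LFml.peval]
  · exact of_peval_imp (ih₁.and ih₂) fun g => by grind [LFml.imp, LFml.peval]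

theorem gi_comp {d : T.V} (h₁ : LAEProv T Th (.gi φ c ψ)) (h₂ : LAEProv T Th (.gi ψ d χ)) :
    LAEProv T Th (.gi φ (T.op c d) χ) :=
  .mp (h₁.and h₂) (.a9 φ ψ χ c d)

theorem gi_one_comp (h₁ : LAEProv T Th (.gi φ T.one ψ)) (h₂ : LAEProv T Th (.gi ψ c χ)) :
    LAEProv T Th (.gi φ c χ) := by
  simpa only [T.one_op] using h₁.gi_comp h₂

theorem gi_comp_one (h₁ : LAEProv T Th (.gi φ c ψ)) (h₂ : LAEProv T Th (.gi ψ T.one χ)) :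
    LAEProv T Th (.gi φ c χ) := by
  simpa only [T.op_one'] using h₁.gi_comp h₂

theorem gi_of_one (h : LAEProv T Th (.gi φ T.one ψ)) : LAEProv T Th (.gi φ c ψ) :=
  .mp h (.a3 φ ψ (T.val_le_one c))

theorem gi_disj {l : List (BExp N)} (h : ∀ φ ∈ l, LAEProv T Th (.gi φ c ψ)) :
    LAEProv T Th (.gi (BExp.disj l) c ψ) := by
  induction l with
  | nil => exact gi_of_one (.a1 (BExp.tautology_bot ψ))
  | cons φ rest ih =>
    refine .mp ((h φ List.mem_cons_self).and (ih fun χ hχ => h χ ?_)) (.a7 _ _ ψ c)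
    exact List.mem_cons_of_mem φ hχ

end LAEProv

namespace LAE

variable {N : ℕ} {T : FiniteTNorm}

def falsum (N : ℕ) (T : FiniteTNorm) : LFml N T.V := .gi .top T.one .bot

def Consistent (T : FiniteTNorm) (Th : Set (LFml N T.V)) : Prop :=
  ¬ LAEProv T Th (falsum N T)

lemma consistent_insert_not {Th : Set (LFml N T.V)} {Φ : LFml N T.V}
    (h : ¬ LAEProv T Th Φ) : Consistent T (insert Φ.not Th) := by
  intro hfalse
  refine h ((LAEProv.a10.and hfalse.deduction).of_peval_imp fun g => ?_)
  grind [LFml.imp, LFml.peval, falsum]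

lemma exists_maximal_consistent {Th : Set (LFml N T.V)} (h : Consistent T Th) :
    ∃ Δ, Th ⊆ Δ ∧ Maximal (Consistent T) Δ := by
  refine zorn_subset_nonempty {S | Consistent T S}
    (fun C hC hchain hne => ⟨⋃₀ C, fun hfalse => ?_, fun _ => Set.subset_sUnion_of_mem⟩) Th h
  obtain ⟨s, hs, hsf, hsp⟩ := hfalse.exists_finite_subset
  obtain ⟨S, hS, hsS⟩ := hchain.directedOn.exists_mem_subset_of_finset_subset_biUnion hne
    (s := hsf.toFinset) (by simpa [← Set.sUnion_eq_biUnion] using hs)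
  exact hC hS (hsp.mono (by simpa using hsS))

structure MaxConsistent (T : FiniteTNorm) (N : ℕ) where
  Δ : Set (LFml N T.V)
  maximal : Maximal (Consistent T) Δ

namespace MaxConsistent

variable (M : MaxConsistent T N) {Φ Ψ : LFml N T.V}

lemma consistent : Consistent T M.Δ := M.maximal.prop

lemma mem_of_prov (h : LAEProv T M.Δ Φ) : Φ ∈ M.Δ :=
  M.maximal.mem_of_prop_insert fun hfalse => M.consistent (.mp h hfalse.deduction)

lemma mem_of_mem_of_peval_imp (hΦ : Φ ∈ M.Δ)
    (h : ∀ g : BExp N → T.V → BExp N → Bool, Φ.peval g = true → Ψ.peval g = true) :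
    Ψ ∈ M.Δ :=
  M.mem_of_prov ((LAEProv.hyp hΦ).of_peval_imp h)

lemma not_mem_iff : Φ.not ∈ M.Δ ↔ Φ ∉ M.Δ := by
  refine ⟨fun hnot hΦ => M.consistent ?_, fun hΦ => ?_⟩
  · exact ((LAEProv.hyp hΦ).and (.hyp hnot)).of_peval_imp fun g => by grind [LFml.peval]
  · exact M.maximal.mem_of_prop_insert (consistent_insert_not fun h => hΦ (M.mem_of_prov h))

lemma and_mem_iff : Φ.and Ψ ∈ M.Δ ↔ Φ ∈ M.Δ ∧ Ψ ∈ M.Δ := by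
  refine ⟨fun h => ⟨?_, ?_⟩, fun ⟨hΦ, hΨ⟩ => M.mem_of_prov ((LAEProv.hyp hΦ).and (.hyp hΨ))⟩
  all_goals exact M.mem_of_mem_of_peval_imp h fun g => by grind [LFml.peval]

lemma or_mem_iff : Φ.or Ψ ∈ M.Δ ↔ Φ ∈ M.Δ ∨ Ψ ∈ M.Δ := by
  refine ⟨fun h => or_iff_not_imp_left.2 fun hΦ => ?_, fun h => ?_⟩
  · have := M.and_mem_iff.2 ⟨h, M.not_mem_iff.2 hΦ⟩
    exact M.mem_of_mem_of_peval_imp this fun g => by grind [LFml.peval]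
  · rcases h with h | h
    all_goals exact M.mem_of_mem_of_peval_imp h fun g => by grind [LFml.peval]

end MaxConsistent

end LAE

namespace LAE.MaxConsistent

open BExp

variable {N : ℕ} {T : FiniteTNorm} (M : MaxConsistent T N)

def World : Type := {f : Fin N → Bool // (LFml.gi (mec f) T.one .bot).not ∈ M.Δ}

instance : Finite M.World := Subtype.finite

noncomputable instance : Fintype M.World := Fintype.ofFinite _

variable {M}

lemma gi_bot_not_mem (w : M.World) (c : T.V) : LFml.gi (mec w.1) c .bot ∉ M.Δ :=
  fun h => M.not_mem_iff.1 w.2 (M.mem_of_prov (.mp (.hyp h) (.a5 _ c)))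

variable (M)

lemma world_or_gi_bot_mem (f : Fin N → Bool) :
    (∃ w : M.World, w.1 = f) ∨ LFml.gi (mec f) T.one .bot ∈ M.Δ := by
  by_cases h : LFml.gi (mec f) T.one .bot ∈ M.Δ
  · exact Or.inr h
  · exact Or.inl ⟨⟨f, M.not_mem_iff.2 h⟩, rfl⟩

instance : Nonempty M.World := by
  by_contra hempty
  have hbot : ∀ χ ∈ dnf (.top : BExp N), LAEProv T M.Δ (.gi χ T.one .bot) := by
    intro χ hχ
    obtain ⟨f, -, rfl⟩ := mem_dnf.1 hχ
    obtain ⟨w, -⟩ | h := M.world_or_gi_bot_mem f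
    exacts [(hempty ⟨w⟩).elim, .hyp h]
  exact M.consistent (LAEProv.gi_one_comp (.a1 (tautology_dnf .top)) (LAEProv.gi_disj hbot))

lemma exists_max_grade (v w : M.World) :
    ∃ c : T.V, LFml.gi (mec v.1) c (mec w.1) ∈ M.Δ ∧
      ∀ d : T.V, LFml.gi (mec v.1) d (mec w.1) ∈ M.Δ → (d : ℝ) ≤ c := by
  have : Finite T.V := T.finite.to_subtype
  have hzero : LFml.gi (mec v.1) T.zero (mec w.1) ∈ M.Δ :=
    M.mem_of_prov (.mp (.hyp w.2) (.a4 _ _))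
  exact Set.exists_max_image _ _ (Set.toFinite _) ⟨T.zero, hzero⟩

noncomputable def sim (v w : M.World) : T.V := (M.exists_max_grade v w).choose

lemma gi_sim_mem (v w : M.World) : LFml.gi (mec v.1) (M.sim v w) (mec w.1) ∈ M.Δ :=
  (M.exists_max_grade v w).choose_spec.1

lemma le_sim {v w : M.World} {c : T.V} (h : LFml.gi (mec v.1) c (mec w.1) ∈ M.Δ) :
    (c : ℝ) ≤ M.sim v w :=
  (M.exists_max_grade v w).choose_spec.2 c h

lemma sim_eq_one_iff (v w : M.World) : M.sim v w = T.one ↔ v = w := by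
  refine ⟨fun h => ?_, ?_⟩
  · by_contra hne
    have hvw : v.1 ≠ w.1 := fun h => hne (Subtype.ext h)
    have hsep : Tautology (mec v.1) ((mec v.1).and (mec w.1).not) := by
      intro u hu
      rw [beval_mec] at hu
      simpa [BExp.beval, hu, Bool.eq_false_iff, beval_mec] using hvw
    have hone := M.gi_sim_mem v w
    rw [h] at hone
    exact gi_bot_not_mem v T.one <| M.mem_of_prov <|
      LAEProv.gi_one_comp (.a1 hsep) (.mp (.hyp hone) (.a2 _ _))
  · rintro rfl
    exact Subtype.ext (le_antisymm (T.val_le_one _) (M.le_sim (M.mem_of_prov (.a1 fun _ h => h))))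

lemma sim_le_sim_swap (v w : M.World) : (M.sim v w : ℝ) ≤ M.sim w v :=
  M.le_sim <| M.mem_of_prov <|
    .mp ((LAEProv.hyp v.2).and (.hyp (M.gi_sim_mem v w))) (.a6 _ (isMec_mec _) (isMec_mec _))

lemma sim_triangle (u v w : M.World) : (T.op (M.sim u v) (M.sim v w) : ℝ) ≤ M.sim u w :=
  M.le_sim <| M.mem_of_prov <| (LAEProv.hyp (M.gi_sim_mem u v)).gi_comp (.hyp (M.gi_sim_mem v w))

noncomputable def canonicalSpace : SimilaritySpace T M.World where
  S := M.sim
  eq_one_iff := M.sim_eq_one_iff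
  symm v w := Subtype.ext (le_antisymm (M.sim_le_sim_swap v w) (M.sim_le_sim_swap w v))
  triangle := M.sim_triangle

def canonicalEval : LAEEval N M.World where
  e φ := {w | φ.beval w.1 = true}
  map_bot := by ext; simp [BExp.beval]
  map_top := by ext; simp [BExp.beval]
  map_and φ ψ := by ext; simp [BExp.beval]
  map_or φ ψ := by ext; simp [BExp.beval]
  map_not φ := by ext; simp [BExp.beval]
  separating v w hne := by
    obtain ⟨i, hi⟩ := Function.ne_iff.1 fun h => hne (Subtype.ext h)
    exact ⟨i, (xor_iff_not_iff _ _).2 fun h => hi (Bool.eq_iff_iff.2 h)⟩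

lemma exists_gi_mem_of_gi_disj_mem (w : M.World) {c : T.V} {l : List (BExp N)}
    (h : LFml.gi (mec w.1) c (disj l) ∈ M.Δ) : ∃ χ ∈ l, LFml.gi (mec w.1) c χ ∈ M.Δ := by
  induction l with
  | nil => exact (gi_bot_not_mem w c h).elim
  | cons φ rest ih =>
    have := M.mem_of_prov (.mp (.hyp h) (.a8 φ (disj rest) c (isMec_mec w.1)))
    rcases M.or_mem_iff.1 this with hφ | hrest
    · exact ⟨φ, List.mem_cons_self, hφ⟩
    · obtain ⟨χ, hχ, hmem⟩ := ih hrest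
      exact ⟨χ, List.mem_cons_of_mem φ hχ, hmem⟩

lemma gi_mem_of_sat {φ ψ : BExp N} {c : T.V}
    (h : LAESat M.canonicalSpace M.canonicalEval (.gi φ c ψ)) : LFml.gi φ c ψ ∈ M.Δ := by
  have hdnf : ∀ χ ∈ dnf φ, LAEProv T M.Δ (.gi χ c ψ) := by
    intro χ hχ
    obtain ⟨f, hf, rfl⟩ := mem_dnf.1 hχ
    obtain ⟨v, rfl⟩ | hbot := M.world_or_gi_bot_mem f
    · obtain ⟨w, hw, hvw⟩ := h hf
      exact LAEProv.gi_comp_one (.mp (.hyp (M.gi_sim_mem v w)) (.a3 _ _ hvw))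
        (.a1 (tautology_mec hw))
    · exact LAEProv.gi_one_comp (.hyp hbot) (LAEProv.gi_of_one (.a1 (tautology_bot ψ)))
  exact M.mem_of_prov (LAEProv.gi_one_comp (.a1 (tautology_dnf φ)) (LAEProv.gi_disj hdnf))

lemma sat_of_gi_mem {φ ψ : BExp N} {c : T.V} (h : LFml.gi φ c ψ ∈ M.Δ) :
    LAESat M.canonicalSpace M.canonicalEval (.gi φ c ψ) := by
  intro v hv
  have hdnf : LFml.gi (mec v.1) c (disj (dnf ψ)) ∈ M.Δ := M.mem_of_prov <|
    LAEProv.gi_comp_one (LAEProv.gi_one_comp (.a1 (tautology_mec hv)) (.hyp h))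
      (.a1 (tautology_dnf ψ))
  obtain ⟨χ, hχ, hvχ⟩ := M.exists_gi_mem_of_gi_disj_mem v hdnf
  obtain ⟨g, hg, rfl⟩ := mem_dnf.1 hχ
  obtain ⟨w, rfl⟩ | hbot := M.world_or_gi_bot_mem g
  · exact ⟨w, hg, M.le_sim hvχ⟩
  · exact (gi_bot_not_mem v c (M.mem_of_prov (LAEProv.gi_comp_one (.hyp hvχ) (.hyp hbot)))).elim

lemma sat_iff_mem (Φ : LFml N T.V) : LAESat M.canonicalSpace M.canonicalEval Φ ↔ Φ ∈ M.Δ := by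
  induction Φ with
  | gi φ c ψ => exact ⟨M.gi_mem_of_sat, M.sat_of_gi_mem⟩
  | and Φ Ψ ihΦ ihΨ => rw [LAESat, ihΦ, ihΨ, M.and_mem_iff]
  | or Φ Ψ ihΦ ihΨ => rw [LAESat, ihΦ, ihΨ, M.or_mem_iff]
  | not Φ ihΦ => rw [LAESat, ihΦ, M.not_mem_iff]

end LAE.MaxConsistent

theorem LAEEntails.prov {N : ℕ} {T : FiniteTNorm} {Th : Set (LFml N T.V)} {Φ : LFml N T.V}
    (h : LAEEntails T Th Φ) : LAEProv T Th Φ := by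
  by_contra hΦ
  obtain ⟨Δ, hsub, hmax⟩ := LAE.exists_maximal_consistent (LAE.consistent_insert_not hΦ)
  let M : LAE.MaxConsistent T N := ⟨Δ, hmax⟩
  have hsat : LAESat M.canonicalSpace M.canonicalEval Φ :=
    h _ _ _ fun Ψ hΨ => (M.sat_iff_mem Ψ).2 (hsub (Set.mem_insert_of_mem _ hΨ))
  exact M.not_mem_iff.1 (hsub (Set.mem_insert _ Th)) ((M.sat_iff_mem Φ).1 hsat)

theorem LAE_soundness_and_completeness_general {N : ℕ} (T : FiniteTNorm)
    (Th : Set (LFml N T.V)) (Φ : LFml N T.V) :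
    LAEProv T Th Φ ↔ LAEEntails T Th Φ :=
  ⟨LAEProv.sound, LAEEntails.prov⟩

/-- Soundness and completeness of the Logic of Approximate Entailment:
`T ⊢_LAE Φ` iff `T ⊨_LAE Φ`. -/
theorem LAE_soundness_and_completeness {N : ℕ} (hN : 0 < N) (T : FiniteTNorm)
    (Th : Set (LFml N T.V)) (Φ : LFml N T.V) :
    LAEProv T Th Φ ↔ LAEEntails T Th Φ :=
  LAE_soundness_and_completeness_general T Th Φ
end

section
/- Neighbourhoods commute with intersections of intervals: let (W,S,≤) be a totally ordered similarity space, let A and B be intervals of W with non-empty intersection, and let c ∈ V. Then U_c(A ∩ B) = U_c(A) ∩ U_c(B). -/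
/-- An interval `[u,v]` of the chain `W`. -/
def IsInterval {W : Type} [LinearOrder W] (A : Set W) : Prop :=
  ∃ u v : W, u ≤ v ∧ A = Set.Icc u v

/-!
For a fixed world `w`, the worlds at least `c`-similar to `w` form an order-convex set: if
`a ≤ x ≤ b`, compatibility of the order gives `S(w,x) ≥ S(w,a)` when `x ≤ w` and
`S(w,x) ≥ S(w,b)` when `w ≤ x`. So the theorem is Helly's theorem on a line: three pairwise
intersecting order-convex sets (`A`, `B` and the `c`-ball around `w`) have a common point,
namely the median of three witnesses of the pairwise intersections.
-/

open Set

theorem Set.uIcc_inter_uIcc_inter_uIcc_nonempty {α : Type*} [LinearOrder α] (x y z : α) :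
    (uIcc x y ∩ uIcc y z ∩ uIcc x z).Nonempty :=
  ⟨max (min x y) (min (max x y) z), by simp only [mem_inter_iff, mem_uIcc]; grind⟩

theorem Set.OrdConnected.inter_inter_nonempty {α : Type*} [LinearOrder α] {s t u : Set α}
    (hs : s.OrdConnected) (ht : t.OrdConnected) (hu : u.OrdConnected)
    (hst : (s ∩ t).Nonempty) (htu : (t ∩ u).Nonempty) (hsu : (s ∩ u).Nonempty) :
    (s ∩ t ∩ u).Nonempty := by
  obtain ⟨x, hxs, hxt⟩ := hst
  obtain ⟨y, hyt, hyu⟩ := htu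
  obtain ⟨z, hzs, hzu⟩ := hsu
  obtain ⟨m, ⟨hmxy, hmyz⟩, hmxz⟩ := uIcc_inter_uIcc_inter_uIcc_nonempty x y z
  exact ⟨m, ⟨hs.uIcc_subset hxs hzs hmxz, ht.uIcc_subset hxt hyt hmxy⟩,
    hu.uIcc_subset hyu hzu hmyz⟩

theorem IsInterval.ordConnected {W : Type} [LinearOrder W] {A : Set W} (hA : IsInterval A) :
    A.OrdConnected := by
  obtain ⟨u, v, -, rfl⟩ := hA
  exact ordConnected_Icc

namespace SimilaritySpace

variable {T : FiniteTNorm} {W : Type} [Fintype W] [Nonempty W] (sp : SimilaritySpace T W)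

theorem mem_nbhd_iff {c : T.V} {A : Set W} {w : W} :
    w ∈ sp.nbhd c A ↔ (A ∩ {x | (c : ℝ) ≤ sp.S w x}).Nonempty :=
  Iff.rfl

theorem nbhd_mono {c : T.V} {A B : Set W} (h : A ⊆ B) : sp.nbhd c A ⊆ sp.nbhd c B :=
  fun _ ⟨a, ha, hwa⟩ => ⟨a, h ha, hwa⟩

end SimilaritySpace

namespace TOSimilaritySpace

variable {T : FiniteTNorm} {W : Type} [Fintype W] [Nonempty W] [LinearOrder W]
  (sp : TOSimilaritySpace T W)

theorem min_le_S_of_le_of_le (w : W) {a x b : W} (hax : a ≤ x) (hxb : x ≤ b) :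
    min (sp.S w a : ℝ) (sp.S w b) ≤ sp.S w x := by
  rcases le_total w x with hwx | hxw
  · calc min (sp.S w a : ℝ) (sp.S w b) ≤ sp.S w b := min_le_right _ _
      _ ≤ min (sp.S w x : ℝ) (sp.S x b) := sp.compat w x b hwx hxb
      _ ≤ sp.S w x := min_le_left _ _
  · rw [sp.symm w a, sp.symm w x]
    calc min (sp.S a w : ℝ) (sp.S w b) ≤ sp.S a w := min_le_left _ _
      _ ≤ min (sp.S a x : ℝ) (sp.S x w) := sp.compat a x w hax hxw
      _ ≤ sp.S x w := min_le_right _ _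

theorem ordConnected_setOf_le_S (w : W) (c : ℝ) : {x | c ≤ (sp.S w x : ℝ)}.OrdConnected :=
  ⟨fun _ ha _ hb _ ⟨hax, hxb⟩ => (le_min ha hb).trans (sp.min_le_S_of_le_of_le w hax hxb)⟩

theorem nbhd_inter_of_ordConnected (c : T.V) {A B : Set W} (hA : A.OrdConnected)
    (hB : B.OrdConnected) (hAB : (A ∩ B).Nonempty) :
    sp.nbhd c (A ∩ B) = sp.nbhd c A ∩ sp.nbhd c B := by
  refine subset_antisymm (subset_inter (sp.nbhd_mono inter_subset_left)
    (sp.nbhd_mono inter_subset_right)) fun w ⟨hwA, hwB⟩ => ?_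
  rw [SimilaritySpace.mem_nbhd_iff] at hwA hwB ⊢
  exact hA.inter_inter_nonempty hB (sp.ordConnected_setOf_le_S w c) hAB hwB hwA

end TOSimilaritySpace

/-- Neighbourhoods commute with intersections of intervals: for intervals
`A`, `B` with non-empty intersection, `U_c(A ∩ B) = U_c(A) ∩ U_c(B)`. -/
theorem toss_nbhd_inter_intervals {T : FiniteTNorm} {W : Type}
    [Fintype W] [Nonempty W] [LinearOrder W]
    (sp : TOSimilaritySpace T W) (A B : Set W)
    (hA : IsInterval A) (hB : IsInterval B) (hAB : (A ∩ B).Nonempty) (c : T.V) :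
    sp.toSimilaritySpace.nbhd c (A ∩ B) =
      sp.toSimilaritySpace.nbhd c A ∩ sp.toSimilaritySpace.nbhd c B :=
  sp.nbhd_inter_of_ordConnected c hA.ordConnected hB.ordConnected hAB
end

section
/- In a component-wise ordered similarity space, for any non-empty subset A of W, the diamond ◇≤A equals the intersection, over all indices i and all elements w_i ∈ W_i such that A ⊆ π(◇≤_i{w_i}), of the sets π(◇≤_i{w_i}); here ◇≤_i denotes the downward closure in the chain (W_i, ⊑_i). -/
/-- The similarity on the product `W = ∏ i, W i` of totally ordered similarity spaces:
`S(v,w) = min_i S_i(v_i, w_i)`. -/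
noncomputable def prodS {T : FiniteTNorm} {M : ℕ} {W : Fin M → Type}
    [∀ i, Fintype (W i)] [∀ i, Nonempty (W i)] [∀ i, LinearOrder (W i)]
    (hM : 0 < M) (sps : ∀ i, TOSimilaritySpace T (W i))
    (v w : ∀ i, W i) : T.V :=
  haveI : Nonempty (Fin M) := ⟨⟨0, hM⟩⟩
  Finset.univ.inf' Finset.univ_nonempty fun i => (sps i).S (v i) (w i)

/-- The `c`-neighbourhood in a component-wise ordered similarity space. -/
def pNbhd {T : FiniteTNorm} {M : ℕ} {W : Fin M → Type}
    [∀ i, Fintype (W i)] [∀ i, Nonempty (W i)] [∀ i, LinearOrder (W i)]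
    (hM : 0 < M) (sps : ∀ i, TOSimilaritySpace T (W i))
    (c : T.V) (A : Set (∀ i, W i)) : Set (∀ i, W i) :=
  {w | ∃ a ∈ A, (c : ℝ) ≤ (prodS hM sps w a : ℝ)}

/-- `◇≤A` in a component-wise ordered similarity space. -/
def pDcl {M : ℕ} {W : Fin M → Type} [∀ i, LinearOrder (W i)]
    (A : Set (∀ i, W i)) : Set (∀ i, W i) :=
  {w | ∀ i, ∃ v ∈ A, w i ≤ v i}

/-- `◇≥A` in a component-wise ordered similarity space. -/
def pUcl {M : ℕ} {W : Fin M → Type} [∀ i, LinearOrder (W i)]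
    (A : Set (∀ i, W i)) : Set (∀ i, W i) :=
  {w | ∀ i, ∃ v ∈ A, v i ≤ w i}

/-- The cylindrical extension `πC` of a subset `C` of the `i`-th component. -/
def cyl {M : ℕ} {W : Fin M → Type} (i : Fin M) (C : Set (W i)) : Set (∀ j, W j) :=
  {w | w i ∈ C}

/-- The cylindrical extension `πA` of a subset `A` of the partial product over the
block of coordinates `I`. -/
def cylOn {M : ℕ} {W : Fin M → Type} (I : Finset (Fin M))
    (A : Set (∀ i : {x // x ∈ I}, W i.1)) : Set (∀ i, W i) :=
  {w | (fun i : {x // x ∈ I} => w i.1) ∈ A}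

/-!
A finite non-empty subset of a chain has a greatest element, so its downward closure is
the principal down-set of that element, hence the intersection of all principal down-sets
containing it. Since `◇≤A` is the intersection over the coordinates `i` of the cylinders over
the downward closures of the projections of `A`, the statement follows coordinate by coordinate.
-/

open Set

lemma dcl_singleton {α : Type} [LinearOrder α] (x : α) : dcl {x} = Iic x := by
  ext; simp [dcl]

lemma dcl_eq_iInter_Iic {α : Type} [LinearOrder α] {B : Set α} (hfin : B.Finite)
    (hne : B.Nonempty) : dcl B = ⋂ x ∈ upperBounds B, Iic x := by
  ext w
  simp only [mem_iInter₂, mem_Iic]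
  constructor
  · rintro ⟨b, hb, hwb⟩ x hx
    exact hwb.trans (hx hb)
  · intro h
    obtain ⟨m, hm, hmax⟩ := exists_max_image B id hfin hne
    exact ⟨m, hm, h m hmax⟩

lemma cyl_eq_preimage {M : ℕ} {W : Fin M → Type} (i : Fin M) (C : Set (W i)) :
    cyl i C = Function.eval i ⁻¹' C :=
  rfl

lemma pDcl_eq_iInter_cyl {M : ℕ} {W : Fin M → Type} [∀ i, LinearOrder (W i)]
    (A : Set (∀ i, W i)) : pDcl A = ⋂ i, cyl i (dcl (Function.eval i '' A)) := by
  ext w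
  simp [pDcl, cyl, dcl]

theorem pDcl_eq_iInter_general {M : ℕ} {W : Fin M → Type}
    [∀ i, Fintype (W i)] [∀ i, LinearOrder (W i)]
    (A : Set (∀ i, W i)) (hA : A.Nonempty) :
    pDcl A = ⋂ (i : Fin M), ⋂ (x : W i), ⋂ (_ : A ⊆ cyl i (dcl {x})), cyl i (dcl {x}) := by
  rw [pDcl_eq_iInter_cyl]
  refine iInter_congr fun i => ?_
  rw [dcl_eq_iInter_Iic (A.toFinite.image _) (hA.image _)]
  simp only [dcl_singleton, cyl_eq_preimage, preimage_iInter₂, ← image_subset_iff,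
    mem_upperBounds_iff_subset_Iic]

/-- In a component-wise ordered similarity space, for non-empty `A`,
`◇≤A` is the intersection, over all `i` and all `x ∈ Wᵢ` with `A ⊆ π(◇≤ᵢ{x})`, of the
sets `π(◇≤ᵢ{x})`. -/
theorem pDcl_eq_iInter {T : FiniteTNorm} {M : ℕ} {W : Fin M → Type}
    [∀ i, Fintype (W i)] [∀ i, Nonempty (W i)] [∀ i, LinearOrder (W i)]
    (hM : 0 < M) (sps : ∀ i, TOSimilaritySpace T (W i))
    (A : Set (∀ i, W i)) (hA : A.Nonempty) :
    pDcl A = ⋂ (i : Fin M), ⋂ (x : W i), ⋂ (_ : A ⊆ cyl i (dcl {x})), cyl i (dcl {x}) :=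
  pDcl_eq_iInter_general A hA
end

section
/- In a component-wise ordered similarity space, neighbourhood inclusions factor over disjoint coordinate blocks: let 1 ≤ i_1 < … < i_k ≤ M and 1 ≤ j_1 < … < j_l ≤ M with {i_1,…,i_k} and {j_1,…,j_l} disjoint, let A, C ⊆ W_{i_1} × … × W_{i_k} and B, D ⊆ W_{j_1} × … × W_{j_l} all be non-empty, and let c ∈ V. Then πA ⊆ U_c(πC) and πB ⊆ U_c(πD) hold if and only if π(A × B) ⊆ U_c(π(C × D)). -/
open Function

lemma FiniteTNorm.coe_le_one {T : FiniteTNorm} (c : T.V) : (c : ℝ) ≤ 1 := (T.subset c.2).2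

lemma SimilaritySpace.coe_S_self {T : FiniteTNorm} {W : Type} [Fintype W] [Nonempty W]
    (sp : SimilaritySpace T W) (u : W) : (sp.S u u : ℝ) = 1 := by
  rw [(sp.eq_one_iff u u).mpr rfl]
  rfl

section Cylinders

variable {M : ℕ} {W : Fin M → Type}

lemma cylOn_eq_preimage (I : Finset (Fin M)) (A : Set (∀ i : {x // x ∈ I}, W i.1)) :
    cylOn I A = I.restrict ⁻¹' A :=
  rfl

lemma restrict_updateFinset_of_disjoint {I J : Finset (Fin M)} (hIJ : Disjoint I J)
    (x : ∀ i, W i) (a : ∀ i : {x // x ∈ I}, W i.1) :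
    J.restrict (updateFinset x I a) = J.restrict x := by
  ext j
  simp [updateFinset, Finset.disjoint_right.mp hIJ j.2]

variable [∀ i, Nonempty (W i)]

lemma restrict_surjective (I : Finset (Fin M)) :
    Surjective (I.restrict : (∀ i, W i) → ∀ i : {x // x ∈ I}, W i.1) :=
  fun a => ⟨updateFinset (fun _ => Classical.arbitrary _) I a, restrict_updateFinset _ _⟩

lemma restrict_prod_restrict_surjective {I J : Finset (Fin M)} (hIJ : Disjoint I J) :
    Surjective fun w : ∀ i, W i => (I.restrict w, J.restrict w) := by
  rintro ⟨a, b⟩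
  refine ⟨updateFinset (updateFinset (fun _ => Classical.arbitrary _) I a) J b, ?_⟩
  simp only [restrict_updateFinset_of_disjoint hIJ.symm, restrict_updateFinset]

lemma cylOn_subset_cylOn_iff {I : Finset (Fin M)} {A P : Set (∀ i : {x // x ∈ I}, W i.1)} :
    cylOn I A ⊆ cylOn I P ↔ A ⊆ P :=
  (restrict_surjective I).preimage_subset_preimage_iff

lemma cylOn_inter_cylOn_subset_iff {I J : Finset (Fin M)} (hIJ : Disjoint I J)
    {A P : Set (∀ i : {x // x ∈ I}, W i.1)} {B Q : Set (∀ j : {x // x ∈ J}, W j.1)}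
    (hA : A.Nonempty) (hB : B.Nonempty) :
    cylOn I A ∩ cylOn J B ⊆ cylOn I P ∩ cylOn J Q ↔ A ⊆ P ∧ B ⊆ Q := by
  have h := (restrict_prod_restrict_surjective (W := W) hIJ).preimage_subset_preimage_iff
    (s := A ×ˢ B) (t := P ×ˢ Q)
  rwa [Set.prod_subset_prod_iff' (hA.prod hB)] at h

end Cylinders

section Neighbourhoods

variable {T : FiniteTNorm} {M : ℕ} {W : Fin M → Type}
    [∀ i, Fintype (W i)] [∀ i, Nonempty (W i)] [∀ i, LinearOrder (W i)]
    (hM : 0 < M) (sps : ∀ i, TOSimilaritySpace T (W i)) (c : T.V)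

def blockNbhd (I : Finset (Fin M)) (C : Set (∀ i : {x // x ∈ I}, W i.1)) :
    Set (∀ i : {x // x ∈ I}, W i.1) :=
  {x | ∃ a ∈ C, ∀ i, (c : ℝ) ≤ ((sps i.1).S (x i) (a i) : ℝ)}

lemma le_prodS_iff (v w : ∀ i, W i) :
    (c : ℝ) ≤ (prodS hM sps v w : ℝ) ↔ ∀ i, (c : ℝ) ≤ ((sps i).S (v i) (w i) : ℝ) := by
  change c ≤ prodS hM sps v w ↔ _
  simp [prodS, Finset.le_inf'_iff, ← Subtype.coe_le_coe]

lemma le_S_self (i : Fin M) (u : W i) : (c : ℝ) ≤ ((sps i).S u u : ℝ) := by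
  rw [SimilaritySpace.coe_S_self]
  exact FiniteTNorm.coe_le_one c

variable {hM sps c}

lemma pNbhd_mono {A B : Set (∀ i, W i)} (h : A ⊆ B) : pNbhd hM sps c A ⊆ pNbhd hM sps c B :=
  fun _ ⟨a, ha, hwa⟩ => ⟨a, h ha, hwa⟩

lemma restrict_mem_blockNbhd {I : Finset (Fin M)} {C : Set (∀ i : {x // x ∈ I}, W i.1)}
    {w : ∀ i, W i} (hw : w ∈ pNbhd hM sps c (cylOn I C)) :
    I.restrict w ∈ blockNbhd sps c I C := by
  obtain ⟨z, hzC, hwz⟩ := hw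
  exact ⟨I.restrict z, hzC, fun i => (le_prodS_iff hM sps c w z).mp hwz i⟩

lemma pNbhd_cylOn (I : Finset (Fin M)) (C : Set (∀ i : {x // x ∈ I}, W i.1)) :
    pNbhd hM sps c (cylOn I C) = cylOn I (blockNbhd sps c I C) := by
  refine Set.Subset.antisymm (fun w hw => restrict_mem_blockNbhd hw) ?_
  rintro w ⟨a, haC, hwa⟩
  refine ⟨updateFinset w I a, by rwa [cylOn_eq_preimage, Set.mem_preimage,
    restrict_updateFinset], (le_prodS_iff hM sps c _ _).mpr fun i => ?_⟩
  by_cases hi : i ∈ I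
  · simpa [updateFinset, hi] using hwa ⟨i, hi⟩
  · simpa [updateFinset, hi] using le_S_self sps c i (w i)

lemma pNbhd_cylOn_inter_cylOn {I J : Finset (Fin M)} (hIJ : Disjoint I J)
    (C : Set (∀ i : {x // x ∈ I}, W i.1)) (D : Set (∀ j : {x // x ∈ J}, W j.1)) :
    pNbhd hM sps c (cylOn I C ∩ cylOn J D) =
      cylOn I (blockNbhd sps c I C) ∩ cylOn J (blockNbhd sps c J D) := by
  refine Set.Subset.antisymm (fun w hw => ⟨restrict_mem_blockNbhd (pNbhd_mono
    Set.inter_subset_left hw), restrict_mem_blockNbhd (pNbhd_mono Set.inter_subset_right hw)⟩) ?_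
  rintro w ⟨⟨a, haC, hwa⟩, ⟨b, hbD, hwb⟩⟩
  refine ⟨updateFinset (updateFinset w I a) J b, ⟨?_, ?_⟩, (le_prodS_iff hM sps c _ _).mpr
    fun i => ?_⟩
  · rwa [cylOn_eq_preimage, Set.mem_preimage, restrict_updateFinset_of_disjoint hIJ.symm,
      restrict_updateFinset]
  · rwa [cylOn_eq_preimage, Set.mem_preimage, restrict_updateFinset]
  · by_cases hiJ : i ∈ J
    · simpa [updateFinset, hiJ] using hwb ⟨i, hiJ⟩
    by_cases hiI : i ∈ I
    · simpa [updateFinset, hiI, hiJ] using hwa ⟨i, hiI⟩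
    · simpa [updateFinset, hiI, hiJ] using le_S_self sps c i (w i)

end Neighbourhoods

theorem pNbhd_factor_blocks_general {T : FiniteTNorm} {M : ℕ} {W : Fin M → Type}
    [∀ i, Fintype (W i)] [∀ i, Nonempty (W i)] [∀ i, LinearOrder (W i)]
    (hM : 0 < M) (sps : ∀ i, TOSimilaritySpace T (W i))
    (I J : Finset (Fin M)) (hIJ : Disjoint I J)
    (A C : Set (∀ i : {x // x ∈ I}, W i.1)) (B D : Set (∀ j : {x // x ∈ J}, W j.1))
    (hA : A.Nonempty) (hB : B.Nonempty)
    (c : T.V) :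
    (cylOn I A ⊆ pNbhd hM sps c (cylOn I C) ∧ cylOn J B ⊆ pNbhd hM sps c (cylOn J D)) ↔
      cylOn I A ∩ cylOn J B ⊆ pNbhd hM sps c (cylOn I C ∩ cylOn J D) := by
  rw [pNbhd_cylOn_inter_cylOn hIJ, pNbhd_cylOn, pNbhd_cylOn, cylOn_subset_cylOn_iff,
    cylOn_subset_cylOn_iff, cylOn_inter_cylOn_subset_iff hIJ hA hB]

/-- In a component-wise ordered similarity space, neighbourhood inclusions
factor over disjoint coordinate blocks: for non-empty `A, C` over block `I` and non-empty
`B, D` over a disjoint block `J`, `πA ⊆ U_c(πC)` and `πB ⊆ U_c(πD)` iff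
`π(A × B) ⊆ U_c(π(C × D))` (the cylindrical extension of a product over disjoint blocks
being the intersection of the cylindrical extensions). -/
theorem pNbhd_factor_blocks {T : FiniteTNorm} {M : ℕ} {W : Fin M → Type}
    [∀ i, Fintype (W i)] [∀ i, Nonempty (W i)] [∀ i, LinearOrder (W i)]
    (hM : 0 < M) (sps : ∀ i, TOSimilaritySpace T (W i))
    (I J : Finset (Fin M)) (hI : I.Nonempty) (hJ : J.Nonempty) (hIJ : Disjoint I J)
    (A C : Set (∀ i : {x // x ∈ I}, W i.1)) (B D : Set (∀ j : {x // x ∈ J}, W j.1))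
    (hA : A.Nonempty) (hB : B.Nonempty) (hC : C.Nonempty) (hD : D.Nonempty)
    (c : T.V) :
    (cylOn I A ⊆ pNbhd hM sps c (cylOn I C) ∧ cylOn J B ⊆ pNbhd hM sps c (cylOn J D)) ↔
      cylOn I A ∩ cylOn J B ⊆ pNbhd hM sps c (cylOn I C ∩ cylOn J D) :=
  pNbhd_factor_blocks_general hM sps I J hIJ A C B D hA hB c
end

section
/- In a component-wise ordered similarity space, emptiness of intersections with the diamond of a set decomposes over disjoint coordinate blocks: let 1 ≤ i_1 < … < i_k ≤ M and 1 ≤ j_1 < … < j_l ≤ M with {i_1,…,i_k} and {j_1,…,j_l} disjoint, let A ⊆ W, B ⊆ W_{i_1} × … × W_{i_k} and C ⊆ W_{j_1} × … × W_{j_l}. Then ◇≤A ∩ πB ∩ πC = ∅ if and only if ◇≤A ∩ πB = ∅ or ◇≤A ∩ πC = ∅; the analogous statement holds with ◇≥ in place of ◇≤. -/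
section Blocks

variable {M : ℕ} {W : Fin M → Type}

lemma piecewise_mem_cylOn_of_disjoint {I J : Finset (Fin M)} (hIJ : Disjoint I J)
    {B : Set (∀ i : {x // x ∈ I}, W i.1)} {w : ∀ i, W i} (hw : w ∈ cylOn I B) (u : ∀ i, W i) :
    J.piecewise u w ∈ cylOn I B := by
  have hrestrict :
      (fun i : {x // x ∈ I} => J.piecewise u w i.1) = fun i : {x // x ∈ I} => w i.1 :=
    funext fun i => Finset.piecewise_eq_of_notMem _ _ _ (Finset.disjoint_left.mp hIJ i.2)
  show (fun i : {x // x ∈ I} => J.piecewise u w i.1) ∈ B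
  rwa [hrestrict]

lemma piecewise_mem_cylOn {J : Finset (Fin M)} {C : Set (∀ j : {x // x ∈ J}, W j.1)}
    {u : ∀ i, W i} (hu : u ∈ cylOn J C) (w : ∀ i, W i) :
    J.piecewise u w ∈ cylOn J C := by
  have hrestrict :
      (fun j : {x // x ∈ J} => J.piecewise u w j.1) = fun j : {x // x ∈ J} => u j.1 :=
    funext fun j => Finset.piecewise_eq_of_mem _ _ _ j.2
  show (fun j : {x // x ∈ J} => J.piecewise u w j.1) ∈ C
  rwa [hrestrict]

theorem pi_inter_cylOn_inter_cylOn_eq_empty_iff {I J : Finset (Fin M)} (hIJ : Disjoint I J)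
    (t : ∀ i, Set (W i)) (B : Set (∀ i : {x // x ∈ I}, W i.1))
    (C : Set (∀ j : {x // x ∈ J}, W j.1)) :
    Set.univ.pi t ∩ cylOn I B ∩ cylOn J C = ∅ ↔
      Set.univ.pi t ∩ cylOn I B = ∅ ∨ Set.univ.pi t ∩ cylOn J C = ∅ := by
  refine ⟨fun h => ?_, ?_⟩
  · by_contra! hne
    obtain ⟨⟨w, hwt, hwB⟩, ⟨u, hut, huC⟩⟩ := hne
    have hglued : J.piecewise u w ∈ Set.univ.pi t ∩ cylOn I B ∩ cylOn J C :=
      ⟨⟨Finset.piecewise_mem_set_pi J hut hwt, piecewise_mem_cylOn_of_disjoint hIJ hwB u⟩,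
        piecewise_mem_cylOn huC w⟩
    simp [h] at hglued
  · rintro (h | h) <;> apply Set.eq_empty_of_subset_empty <;> rw [← h]
    · exact Set.inter_subset_left
    · exact Set.inter_subset_inter_left _ Set.inter_subset_left

variable [∀ i, LinearOrder (W i)]

lemma pDcl_eq_pi (A : Set (∀ i, W i)) :
    pDcl A = Set.univ.pi fun i => {x | ∃ v ∈ A, x ≤ v i} := by
  ext w
  simp [pDcl]

lemma pUcl_eq_pi (A : Set (∀ i, W i)) :
    pUcl A = Set.univ.pi fun i => {x | ∃ v ∈ A, v i ≤ x} := by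
  ext w
  simp [pUcl]

end Blocks

theorem pdiamond_inter_blocks_empty_general {M : ℕ} {W : Fin M → Type}
    [∀ i, LinearOrder (W i)]
    (I J : Finset (Fin M)) (hIJ : Disjoint I J)
    (A : Set (∀ i, W i))
    (B : Set (∀ i : {x // x ∈ I}, W i.1)) (C : Set (∀ j : {x // x ∈ J}, W j.1)) :
    (pDcl A ∩ cylOn I B ∩ cylOn J C = ∅ ↔
      pDcl A ∩ cylOn I B = ∅ ∨ pDcl A ∩ cylOn J C = ∅) ∧
    (pUcl A ∩ cylOn I B ∩ cylOn J C = ∅ ↔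
      pUcl A ∩ cylOn I B = ∅ ∨ pUcl A ∩ cylOn J C = ∅) := by
  rw [pDcl_eq_pi, pUcl_eq_pi]
  exact ⟨pi_inter_cylOn_inter_cylOn_eq_empty_iff hIJ _ B C,
    pi_inter_cylOn_inter_cylOn_eq_empty_iff hIJ _ B C⟩

/-- In a component-wise ordered similarity space, emptiness of
intersections with the diamond of a set decomposes over disjoint coordinate blocks:
`◇≤A ∩ πB ∩ πC = ∅` iff `◇≤A ∩ πB = ∅` or `◇≤A ∩ πC = ∅`; likewise for `◇≥`. -/
theorem pdiamond_inter_blocks_empty {T : FiniteTNorm} {M : ℕ} {W : Fin M → Type}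
    [∀ i, Fintype (W i)] [∀ i, Nonempty (W i)] [∀ i, LinearOrder (W i)]
    (hM : 0 < M) (sps : ∀ i, TOSimilaritySpace T (W i))
    (I J : Finset (Fin M)) (hI : I.Nonempty) (hJ : J.Nonempty) (hIJ : Disjoint I J)
    (A : Set (∀ i, W i))
    (B : Set (∀ i : {x // x ∈ I}, W i.1)) (C : Set (∀ j : {x // x ∈ J}, W j.1)) :
    (pDcl A ∩ cylOn I B ∩ cylOn J C = ∅ ↔
      pDcl A ∩ cylOn I B = ∅ ∨ pDcl A ∩ cylOn J C = ∅) ∧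
    (pUcl A ∩ cylOn I B ∩ cylOn J C = ∅ ↔
      pUcl A ∩ cylOn I B = ∅ ∨ pUcl A ∩ cylOn J C = ∅) :=
  pdiamond_inter_blocks_empty_general I J hIJ A B C
end

section
/- In a component-wise ordered similarity space, for any index i, any A ⊆ W_i and any B ⊆ W: if πA ∩ ◇≤B = ∅, then ◇≥(πA) ∩ ◇≤B = ∅; similarly, if πA ∩ ◇≥B = ∅, then ◇≤(πA) ∩ ◇≥B = ∅. -/
/-! Moving the `i`-th coordinate of `w ∈ ◇≥(πA)` down to that of a witness in `πA` keeps
the point in `◇≤B` and puts it in `πA`; dually for `◇≤(πA)` and `◇≥B`. -/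

section Update

variable {M : ℕ} {W : Fin M → Type}

theorem update_mem_cyl_iff {i : Fin M} {C : Set (W i)} {w : ∀ j, W j} {x : W i} :
    Function.update w i x ∈ cyl i C ↔ x ∈ C := by
  simp [cyl]

variable [∀ i, LinearOrder (W i)]

theorem update_mem_pDcl {B : Set (∀ j, W j)} {w : ∀ j, W j} (hw : w ∈ pDcl B) {i : Fin M}
    {x : W i} (hx : x ≤ w i) : Function.update w i x ∈ pDcl B := by
  intro j
  obtain ⟨b, hb, hwb⟩ := hw j
  refine ⟨b, hb, ?_⟩
  rcases eq_or_ne j i with rfl | hji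
  · simpa using hx.trans hwb
  · simpa [Function.update_of_ne hji] using hwb

theorem update_mem_pUcl {B : Set (∀ j, W j)} {w : ∀ j, W j} (hw : w ∈ pUcl B) {i : Fin M}
    {x : W i} (hx : w i ≤ x) : Function.update w i x ∈ pUcl B := by
  intro j
  obtain ⟨b, hb, hbw⟩ := hw j
  refine ⟨b, hb, ?_⟩
  rcases eq_or_ne j i with rfl | hji
  · simpa using hbw.trans hx
  · simpa [Function.update_of_ne hji] using hbw

theorem pUcl_cyl_inter_pDcl_eq_empty {i : Fin M} {A : Set (W i)} {B : Set (∀ j, W j)}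
    (h : cyl i A ∩ pDcl B = ∅) : pUcl (cyl i A) ∩ pDcl B = ∅ := by
  refine Set.eq_empty_of_forall_notMem fun w ⟨hwA, hwB⟩ => ?_
  obtain ⟨v, hvA, hvw⟩ := hwA i
  exact h.subset ⟨update_mem_cyl_iff.mpr hvA, update_mem_pDcl hwB hvw⟩

theorem pDcl_cyl_inter_pUcl_eq_empty {i : Fin M} {A : Set (W i)} {B : Set (∀ j, W j)}
    (h : cyl i A ∩ pUcl B = ∅) : pDcl (cyl i A) ∩ pUcl B = ∅ := by
  refine Set.eq_empty_of_forall_notMem fun w ⟨hwA, hwB⟩ => ?_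
  obtain ⟨v, hvA, hwv⟩ := hwA i
  exact h.subset ⟨update_mem_cyl_iff.mpr hvA, update_mem_pUcl hwB hwv⟩

end Update

theorem pdiamond_cyl_disjointness_general {M : ℕ} {W : Fin M → Type}
    [∀ i, LinearOrder (W i)]
    (i : Fin M) (A : Set (W i)) (B : Set (∀ j, W j)) :
    (cyl i A ∩ pDcl B = ∅ → pUcl (cyl i A) ∩ pDcl B = ∅) ∧
    (cyl i A ∩ pUcl B = ∅ → pDcl (cyl i A) ∩ pUcl B = ∅) :=
  ⟨pUcl_cyl_inter_pDcl_eq_empty, pDcl_cyl_inter_pUcl_eq_empty⟩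

/-- In a component-wise ordered similarity space, for `A ⊆ Wᵢ` and
`B ⊆ W`: if `πA ∩ ◇≤B = ∅` then `◇≥(πA) ∩ ◇≤B = ∅`, and if `πA ∩ ◇≥B = ∅` then
`◇≤(πA) ∩ ◇≥B = ∅`. -/
theorem pdiamond_cyl_disjointness {T : FiniteTNorm} {M : ℕ} {W : Fin M → Type}
    [∀ i, Fintype (W i)] [∀ i, Nonempty (W i)] [∀ i, LinearOrder (W i)]
    (hM : 0 < M) (sps : ∀ i, TOSimilaritySpace T (W i))
    (i : Fin M) (A : Set (W i)) (B : Set (∀ j, W j)) :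
    (cyl i A ∩ pDcl B = ∅ → pUcl (cyl i A) ∩ pDcl B = ∅) ∧
    (cyl i A ∩ pUcl B = ∅ → pDcl (cyl i A) ∩ pUcl B = ∅) :=
  pdiamond_cyl_disjointness_general i A B
end
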